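/- arXiv:1103.2043 — 6 statements merged into one kernel-verified Lean document; each statement's English description precedes it below -/
import Mathlib

section
/- Suppose a + b = c + d. Then for every n ≥ 1 and all real numbers k_1, ..., k_n, the sum of the n-th powers of the entries of x^{(n)} equals the sum of the n-th powers of the entries of y^{(n)}; that is, Σ_{i=1}^{2^n} x_i^n = Σ_{i=1}^{2^n} y_i^n. -/
/-!
Write `D_t(p)` for the difference of the `p`-th power sums of `x^{(t)}` and `y^{(t)}`.
Since `x^{(t+1)} = x^{(t)} ++ (y^{(t)} + k)` and `y^{(t+1)} = y^{(t)} ++ (x^{(t)} + k)` with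
`k = k_{t+1}`, we get `D_{t+1}(p) = D_t(p) - (∑ (x + k)^p - ∑ (y + k)^p)`. Expanding binomially, the bracket is a
combination of `D_t(j)` for `j ≤ p` in which `D_t(p)` has coefficient one, so when all lower
differences vanish it equals `D_t(p)` and `D_{t+1}(p) = 0`. Starting from `D_1(0) = 0` and
`D_1(1) = a + b - c - d = 0`, induction gives `D_t(p) = 0` for all `p ≤ t`.
-/

/-- The pair of sequences `(x^{(t+1)}, y^{(t+1)})` of length `2^(t+1)` (0-based internal
level `t` corresponds to the paper's level `m = t + 1`).  `(seqXY a b c d k t i).1` is the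
`i`-th entry (0-based) of `x^{(t+1)}` and `.2` that of `y^{(t+1)}`. -/
noncomputable def seqXY (a b c d : ℝ) (k : ℕ → ℝ) : ℕ → ℕ → ℝ × ℝ
  | 0, i => if i = 0 then (a + k 1, c + k 1) else (b + k 1, d + k 1)
  | t + 1, i =>
      if i < 2 ^ (t + 1) then seqXY a b c d k t i
      else ((seqXY a b c d k t (i - 2 ^ (t + 1))).2 + k (t + 2),
            (seqXY a b c d k t (i - 2 ^ (t + 1))).1 + k (t + 2))

/-- `X a b c d k n i` is the entry `x_{i+1}` of the sequence `x^{(n)}` (for `n ≥ 1`,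
`0 ≤ i < 2^n`). -/
noncomputable def X (a b c d : ℝ) (k : ℕ → ℝ) (n i : ℕ) : ℝ :=
  (seqXY a b c d k (n - 1) i).1

/-- `Y a b c d k n i` is the entry `y_{i+1}` of the sequence `y^{(n)}` (for `n ≥ 1`,
`0 ≤ i < 2^n`). -/
noncomputable def Y (a b c d : ℝ) (k : ℕ → ℝ) (n i : ℕ) : ℝ :=
  (seqXY a b c d k (n - 1) i).2

open Finset

section ShiftedPowerSums

variable {ι R : Type*} (s : Finset ι) (f g : ι → R) (κ : R)

theorem sum_add_pow_eq_sum_range [CommSemiring R] (p : ℕ) :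
    ∑ i ∈ s, (f i + κ) ^ p =
      ∑ j ∈ range (p + 1), (∑ i ∈ s, f i ^ j) * κ ^ (p - j) * p.choose j := by
  simp_rw [add_pow, sum_mul]
  exact sum_comm

theorem sum_add_pow_sub_sum_add_pow [CommRing R] {p : ℕ}
    (h : ∀ j < p, ∑ i ∈ s, f i ^ j = ∑ i ∈ s, g i ^ j) :
    ∑ i ∈ s, (f i + κ) ^ p - ∑ i ∈ s, (g i + κ) ^ p =
      ∑ i ∈ s, f i ^ p - ∑ i ∈ s, g i ^ p := by
  have lower : ∑ j ∈ range p, (∑ i ∈ s, f i ^ j) * κ ^ (p - j) * p.choose j =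
      ∑ j ∈ range p, (∑ i ∈ s, g i ^ j) * κ ^ (p - j) * p.choose j :=
    sum_congr rfl fun j hj => by rw [h j (mem_range.mp hj)]
  rw [sum_add_pow_eq_sum_range, sum_add_pow_eq_sum_range, sum_range_succ, sum_range_succ,
    lower]
  simp

end ShiftedPowerSums

section seqXY

variable (a b c d : ℝ) (k : ℕ → ℝ)

theorem sum_range_seqXY_succ (t : ℕ) (F : ℝ × ℝ → ℝ) :
    ∑ i ∈ range (2 ^ (t + 2)), F (seqXY a b c d k (t + 1) i) =
      ∑ i ∈ range (2 ^ (t + 1)), F (seqXY a b c d k t i) +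
        ∑ i ∈ range (2 ^ (t + 1)),
          F ((seqXY a b c d k t i).2 + k (t + 2), (seqXY a b c d k t i).1 + k (t + 2)) := by
  rw [pow_succ, mul_two, sum_range_add]
  congr 1
  · refine sum_congr rfl fun i hi => ?_
    rw [seqXY, if_pos (mem_range.mp hi)]
  · refine sum_congr rfl fun i _ => ?_
    rw [seqXY, if_neg (by omega), Nat.add_sub_cancel_left]

theorem sum_fst_pow_seqXY_eq_sum_snd_pow (h : a + b = c + d) (t : ℕ) :
    ∀ p ≤ t + 1, ∑ i ∈ range (2 ^ (t + 1)), (seqXY a b c d k t i).1 ^ p =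
      ∑ i ∈ range (2 ^ (t + 1)), (seqXY a b c d k t i).2 ^ p := by
  induction t with
  | zero =>
    intro p hp
    interval_cases p
    · simp
    · simp [seqXY, sum_range_succ]
      linarith
  | succ t ih =>
    intro p hp
    have shift := sum_add_pow_sub_sum_add_pow (range (2 ^ (t + 1)))
      (fun i => (seqXY a b c d k t i).1) (fun i => (seqXY a b c d k t i).2) (k (t + 2))
      (p := p) fun j hj => ih j (by omega)
    rw [sum_range_seqXY_succ a b c d k t fun z => z.1 ^ p,
      sum_range_seqXY_succ a b c d k t fun z => z.2 ^ p]
    linarith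

end seqXY

theorem sum_nth_powers_eq (a b c d : ℝ) (h : a + b = c + d)
    (n : ℕ) (hn : 1 ≤ n) (k : ℕ → ℝ) :
    ∑ i ∈ Finset.range (2 ^ n), X a b c d k n i ^ n =
      ∑ i ∈ Finset.range (2 ^ n), Y a b c d k n i ^ n := by
  obtain ⟨t, rfl⟩ : ∃ t, n = t + 1 := ⟨n - 1, by omega⟩
  exact sum_fst_pow_seqXY_eq_sum_snd_pow a b c d k h t (t + 1) le_rfl
end

section
/- Suppose a + b = c + d. Then for every n ≥ 1, all real numbers k_1, ..., k_n, and every integer m with 1 ≤ m ≤ n, the pyramidal identity Σ_{i=1}^{2^m} x_i^m = Σ_{i=1}^{2^m} y_i^m holds, where the first 2^m entries of x^{(n)} and y^{(n)} coincide with the entries of x^{(m)} and y^{(m)}. Thus the constructed numbers solve the pyramidal system in which the m-th identity involves 2^m terms raised to the power m on each side. -/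
open Finset

section PowerSums

variable {ι R : Type*} [CommRing R] (s : Finset ι) (u v : ι → R) (K : R)

theorem sum_add_pow_eq_sum_powerSum (j : ℕ) :
    ∑ i ∈ s, (u i + K) ^ j =
      ∑ l ∈ range (j + 1), (∑ i ∈ s, u i ^ l) * K ^ (j - l) * (j.choose l : R) := by
  simp only [add_pow, sum_mul]
  exact sum_comm

theorem sum_pow_add_sum_shift_pow_eq {j : ℕ}
    (h : ∀ l < j, ∑ i ∈ s, u i ^ l = ∑ i ∈ s, v i ^ l) :
    ∑ i ∈ s, u i ^ j + ∑ i ∈ s, (v i + K) ^ j =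
      ∑ i ∈ s, v i ^ j + ∑ i ∈ s, (u i + K) ^ j := by
  have lower : ∑ l ∈ range j, (∑ i ∈ s, v i ^ l) * K ^ (j - l) * (j.choose l : R) =
      ∑ l ∈ range j, (∑ i ∈ s, u i ^ l) * K ^ (j - l) * (j.choose l : R) :=
    sum_congr rfl fun l hl => by rw [h l (mem_range.mp hl)]
  simp only [sum_add_pow_eq_sum_powerSum, sum_range_succ, lower, Nat.sub_self, pow_zero,
    Nat.choose_self, Nat.cast_one, mul_one]
  ring

end PowerSums

section Pyramid

variable (a b c d : ℝ) (k : ℕ → ℝ)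

theorem seqXY_succ_of_lt {t i : ℕ} (hi : i < 2 ^ (t + 1)) :
    seqXY a b c d k (t + 1) i = seqXY a b c d k t i := by
  rw [seqXY, if_pos hi]

theorem seqXY_succ_add (t i : ℕ) :
    seqXY a b c d k (t + 1) (2 ^ (t + 1) + i) =
      ((seqXY a b c d k t i).2 + k (t + 2), (seqXY a b c d k t i).1 + k (t + 2)) := by
  rw [seqXY, if_neg (by omega), Nat.add_sub_cancel_left]

theorem seqXY_eq_of_le {t t' : ℕ} (ht : t' ≤ t) {i : ℕ} (hi : i < 2 ^ (t' + 1)) :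
    seqXY a b c d k t i = seqXY a b c d k t' i := by
  induction t, ht using Nat.le_induction with
  | base => rfl
  | succ t ht ih =>
    have hi' : i < 2 ^ (t + 1) := hi.trans_le (Nat.pow_le_pow_right two_pos (by omega))
    rw [seqXY_succ_of_lt a b c d k hi', ih]

theorem sum_range_pow_seqXY_eq (h : a + b = c + d) (t : ℕ) :
    ∀ j ≤ t + 1, ∑ i ∈ range (2 ^ (t + 1)), (seqXY a b c d k t i).1 ^ j =
      ∑ i ∈ range (2 ^ (t + 1)), (seqXY a b c d k t i).2 ^ j := by
  induction t with
  | zero =>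
    intro j hj
    interval_cases j
    · simp
    · simp only [zero_add, pow_one, seqXY, sum_range_succ, range_one, sum_singleton, ↓reduceIte,
        one_ne_zero]
      linarith
  | succ t ih =>
    intro j hj
    have split (f : ℕ → ℝ) : ∑ i ∈ range (2 ^ (t + 1 + 1)), f i =
        ∑ i ∈ range (2 ^ (t + 1)), f i + ∑ i ∈ range (2 ^ (t + 1)), f (2 ^ (t + 1) + i) := by
      rw [pow_succ 2 (t + 1), mul_two, sum_range_add]
    have first_half (f : ℝ × ℝ → ℝ) : ∑ i ∈ range (2 ^ (t + 1)), f (seqXY a b c d k (t + 1) i) =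
        ∑ i ∈ range (2 ^ (t + 1)), f (seqXY a b c d k t i) :=
      sum_congr rfl fun i hi => by rw [seqXY_succ_of_lt a b c d k (mem_range.mp hi)]
    rw [split, split, first_half (·.1 ^ j), first_half (·.2 ^ j)]
    simp only [seqXY_succ_add]
    exact sum_pow_add_sum_shift_pow_eq _ _ _ _ fun l hl => ih l (by omega)

end Pyramid

theorem pyramidal_system_general (a b c d : ℝ) (h : a + b = c + d)
    (n : ℕ) (k : ℕ → ℝ) (m : ℕ) (hm1 : 1 ≤ m) (hmn : m ≤ n) :
    ∑ i ∈ Finset.range (2 ^ m), X a b c d k n i ^ m =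
      ∑ i ∈ Finset.range (2 ^ m), Y a b c d k n i ^ m := by
  obtain ⟨t, rfl⟩ : ∃ t, m = t + 1 := ⟨m - 1, by omega⟩
  have prefix_eq (f : ℝ × ℝ → ℝ) : ∑ i ∈ range (2 ^ (t + 1)), f (seqXY a b c d k (n - 1) i) =
      ∑ i ∈ range (2 ^ (t + 1)), f (seqXY a b c d k t i) :=
    sum_congr rfl fun i hi => by
      rw [seqXY_eq_of_le a b c d k (show t ≤ n - 1 by omega) (mem_range.mp hi)]
  unfold X Y
  rw [prefix_eq (·.1 ^ (t + 1)), prefix_eq (·.2 ^ (t + 1))]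
  exact sum_range_pow_seqXY_eq a b c d k h t _ le_rfl

theorem pyramidal_system (a b c d : ℝ) (h : a + b = c + d)
    (n : ℕ) (hn : 1 ≤ n) (k : ℕ → ℝ) (m : ℕ) (hm1 : 1 ≤ m) (hmn : m ≤ n) :
    ∑ i ∈ Finset.range (2 ^ m), X a b c d k n i ^ m =
      ∑ i ∈ Finset.range (2 ^ m), Y a b c d k n i ^ m :=
  pyramidal_system_general a b c d h n k m hm1 hmn
end

section
/- If there exists an index j with 2 ≤ j ≤ n such that k_j = 0, then for every index m with 1 ≤ m ≤ 2^n there exists an index p with 1 ≤ p ≤ 2^n such that x_m = y_p; that is, every entry of the sequence x^{(n)} also occurs as an entry of the sequence y^{(n)}. -/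
lemma seqXY_key (a b c d : ℝ) (k : ℕ → ℝ) (s : ℕ) (hs : 1 ≤ s) (hk : k (s + 1) = 0) :
    ∀ t, s ≤ t → ∀ i < 2 ^ (t + 1), ∃ p < 2 ^ (t + 1),
      (seqXY a b c d k t i).1 = (seqXY a b c d k t p).2 ∧
      (seqXY a b c d k t i).2 = (seqXY a b c d k t p).1 := by
  intro t
  induction t with
  | zero => omega
  | succ t ih =>
    intro hst i hi
    rcases eq_or_lt_of_le hst with hst | hst
    · -- base: s = t + 1, k (t+2) = 0
      subst hst
      by_cases hil : i < 2 ^ (t + 1)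
      · refine ⟨i + 2 ^ (t + 1), by omega, ?_, ?_⟩ <;>
        · simp [seqXY, hil, Nat.add_sub_cancel, hk]
      · refine ⟨i - 2 ^ (t + 1), by omega, ?_, ?_⟩ <;>
        · have : i - 2 ^ (t + 1) < 2 ^ (t + 1) := by
            simp [pow_succ] at hi; omega
          simp [seqXY, hil, this, hk]
    · have hst' : s ≤ t := by omega
      by_cases hil : i < 2 ^ (t + 1)
      · obtain ⟨p, hp, h1, h2⟩ := ih hst' i hil
        refine ⟨p, by have := Nat.pow_lt_pow_succ (a := 2) (by norm_num) (n := t + 1); omega,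
          ?_, ?_⟩ <;> simp [seqXY, hil, hp, h1, h2]
      · have hi' : i - 2 ^ (t + 1) < 2 ^ (t + 1) := by
          simp [pow_succ] at hi; omega
        obtain ⟨p, hp, h1, h2⟩ := ih hst' (i - 2 ^ (t + 1)) hi'
        refine ⟨p + 2 ^ (t + 1), by simp [pow_succ]; omega, ?_, ?_⟩ <;>
        · have hpl : ¬ p + 2 ^ (t + 1) < 2 ^ (t + 1) := by omega
          simp [seqXY, hil, hpl, Nat.add_sub_cancel, h1, h2]

theorem entries_coincide_of_some_k_zero (a b c d : ℝ) (n : ℕ) (hn : 1 ≤ n)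
    (k : ℕ → ℝ) (hk : ∃ j, 2 ≤ j ∧ j ≤ n ∧ k j = 0) :
    ∀ m < 2 ^ n, ∃ p < 2 ^ n, X a b c d k n m = Y a b c d k n p := by
  obtain ⟨j, hj2, hjn, hkj⟩ := hk
  intro m hm
  have hj : (j - 1) + 1 = j := by omega
  have key := seqXY_key a b c d k (j - 1) (by omega) (by rw [hj]; exact hkj)
    (n - 1) (by omega) m (by rw [show (n - 1) + 1 = n from by omega]; exact hm)
  obtain ⟨p, hp, h1, _⟩ := key
  exact ⟨p, by rw [show (n - 1) + 1 = n from by omega] at hp; exact hp, h1⟩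
end

section
/- For every n ≥ 1 and every integer m with 0 ≤ m ≤ n − 1, the Morse–Hedlund (Thue–Morse) sequence splits the first 2^n natural numbers into two sets with equal power sums: Σ_{i=0}^{2^n − 1} (−1)^{s₂(i)} · i^m = 0, where s₂(i) denotes the number of ones in the binary expansion of i. Equivalently, the sum of i^m over those i in {0, 1, ..., 2^n − 1} whose binary digit sum is even equals the sum of i^m over those i whose binary digit sum is odd. -/
/-- `s₂ i` is the number of ones in the binary expansion of `i` (the sum of its binary
digits); the Thue–Morse (Morse–Hedlund) sequence assigns to `i` the parity of `s₂ i`. -/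
def binaryDigitSum (i : ℕ) : ℕ := (Nat.digits 2 i).sum

/-!
Write `S_n(p) = ∑_{i < 2^n} (-1)^{s₂(i)} p(i)`. Since `s₂(2^n + i) = s₂(i) + 1` for `i < 2^n`,
splitting `[0, 2^{n+1})` into halves gives `S_{n+1}(p) = S_n(p - p(X + 2^n))`, and the
difference operator `p ↦ p - p(X + c)` lowers the degree of every nonzero polynomial.
Hence `S_n` kills every polynomial of degree `< n`, in particular `X^m` for `m < n`.
-/

open Polynomial

theorem binaryDigitSum_two_pow_add {n i : ℕ} (hi : i < 2 ^ n) :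
    binaryDigitSum (2 ^ n + i) = binaryDigitSum i + 1 := by
  have hlen : (Nat.digits 2 i).length ≤ n := (Nat.digits_length_le_iff one_lt_two i).2 hi
  have hdigits := Nat.digits_append_zeroes_append_digits
    (b := 2) (k := n - (Nat.digits 2 i).length) (m := 1) (n := i) one_lt_two one_pos
  rw [Nat.add_sub_cancel' hlen, mul_one, add_comm] at hdigits
  rw [binaryDigitSum, binaryDigitSum, ← hdigits]
  simp

section

variable {R : Type*} [CommRing R]

theorem degree_sub_taylor_lt {p : R[X]} (hp : p ≠ 0) (c : R) :
    (p - taylor c p).degree < p.degree :=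
  degree_sub_lt_left (degree_taylor p c).symm hp (leadingCoeff_taylor c p).symm

theorem sum_range_two_pow_succ_neg_one_pow_binaryDigitSum (n : ℕ) (f : ℕ → R) :
    ∑ i ∈ Finset.range (2 ^ (n + 1)), (-1 : R) ^ binaryDigitSum i * f i =
      ∑ i ∈ Finset.range (2 ^ n), (-1 : R) ^ binaryDigitSum i * (f i - f (2 ^ n + i)) := by
  rw [pow_succ, mul_two, Finset.sum_range_add, ← Finset.sum_add_distrib]
  refine Finset.sum_congr rfl fun i hi => ?_
  rw [binaryDigitSum_two_pow_add (Finset.mem_range.1 hi), pow_succ]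
  ring

theorem sum_range_two_pow_neg_one_pow_binaryDigitSum_mul_eval {n : ℕ} {p : R[X]}
    (hp : p.degree < n) :
    ∑ i ∈ Finset.range (2 ^ n), (-1 : R) ^ binaryDigitSum i * p.eval (i : R) = 0 := by
  induction n generalizing p with
  | zero => simp [degree_eq_bot.1 (by simpa using hp)]
  | succ n ih =>
    rcases eq_or_ne p 0 with rfl | hp0
    · simp
    have hdiff : (p - taylor (2 ^ n : R) p).degree < n :=
      (degree_sub_taylor_lt hp0 _).trans_le (Order.le_of_lt_succ hp)
    rw [sum_range_two_pow_succ_neg_one_pow_binaryDigitSum, ← ih hdiff]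
    refine Finset.sum_congr rfl fun i _ => ?_
    simp [taylor_eval, add_comm]

end

theorem thue_morse_power_sums (n : ℕ) (hn : 1 ≤ n) (m : ℕ) (hm : m ≤ n - 1) :
    ∑ i ∈ Finset.range (2 ^ n), (-1 : ℝ) ^ binaryDigitSum i * (i : ℝ) ^ m = 0 := by
  have hdeg : ((X : ℝ[X]) ^ m).degree < n :=
    (degree_X_pow_le m).trans_lt (by exact_mod_cast (by omega : m < n))
  simpa using sum_range_two_pow_neg_one_pow_binaryDigitSum_mul_eval hdeg
end

section
/- Let a, b, c, d be real numbers with a + b = c + d, let n ≥ 1, and let k₁, ..., kₙ be real numbers. For a subset S of {1, ..., n} write s_S = Σ_{i ∈ S} k_i. Then for every integer m with 1 ≤ m ≤ n + 1, Σ_{S ⊆ {1,...,n}} (−1)^{|S|} [ (a + s_S)^m + (b + s_S)^m ] = Σ_{S ⊆ {1,...,n}} (−1)^{|S|} [ (c + s_S)^m + (d + s_S)^m ]. Equivalently, the 2^{n+1} numbers obtained by adding a or b to the subset sums over even subsets and c or d to the subset sums over odd subsets have the same m-th power sum as the numbers obtained with the roles of {a,b} and {c,d} interchanged, for all 1 ≤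 m ≤ n + 1. -/
/-!
Write `D_j = ∑_{S ⊆ T} (-1)^|S| s_S^j`. Adding an element to `T` replaces `D_j` by a combination
of the `D_i` with `i < j`, so `D_j = 0` for `j < |T|`. Expanding `(x + s_S)^m` binomially, the
alternating sum `∑_{S ⊆ T} (-1)^|S| (x + s_S)^m` is therefore the affine function
`D_m + m x D_{m-1}` of `x` as soon as `m ≤ |T| + 1`, and the sum of its values at `a` and `b`
depends only on `a + b`.
-/

open Finset

variable {ι R : Type*} [DecidableEq ι] [CommRing R]

theorem sum_powerset_neg_one_pow_card_mul_sum_pow_eq_zero (k : ι → R) {T : Finset ι} :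
    ∀ {j : ℕ}, j < T.card → ∑ S ∈ T.powerset, (-1 : R) ^ S.card * (∑ i ∈ S, k i) ^ j = 0 := by
  induction T using Finset.induction_on with
  | empty => simp
  | insert a T ha ih =>
    intro j hj
    rw [card_insert_of_notMem ha] at hj
    have insert_term (S : Finset ι) (hS : S ∈ T.powerset) :
        (-1 : R) ^ (insert a S).card * (∑ i ∈ insert a S, k i) ^ j =
          -((-1 : R) ^ S.card * (∑ i ∈ S, k i) ^ j) -
            ∑ i ∈ range j, k a ^ (j - i) * j.choose i * ((-1 : R) ^ S.card * (∑ x ∈ S, k x) ^ i) := by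
      have haS : a ∉ S := fun h => ha (mem_powerset.1 hS h)
      have factor_sign : ∑ i ∈ range j, k a ^ (j - i) * j.choose i *
            ((-1 : R) ^ S.card * (∑ x ∈ S, k x) ^ i) =
          (-1 : R) ^ S.card * ∑ i ∈ range j, (∑ x ∈ S, k x) ^ i * k a ^ (j - i) * j.choose i := by
        rw [mul_sum]
        exact sum_congr rfl fun i _ => by ring
      rw [factor_sign, card_insert_of_notMem haS, sum_insert haS, add_comm (k a), add_pow,
        sum_range_succ, Nat.sub_self, Nat.choose_self]
      ring
    have vanish : ∑ S ∈ T.powerset, ∑ i ∈ range j,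
        k a ^ (j - i) * j.choose i * ((-1 : R) ^ S.card * (∑ x ∈ S, k x) ^ i) = 0 := by
      rw [sum_comm]
      exact sum_eq_zero fun i hi => by rw [← mul_sum, ih (by simp at hi; omega), mul_zero]
    rw [sum_powerset_insert ha, sum_congr rfl insert_term, sum_sub_distrib, sum_neg_distrib, vanish]
    ring

theorem sum_powerset_neg_one_pow_card_mul_add_sum_pow (k : ι → R) (T : Finset ι) (x : R)
    {m : ℕ} (hm : m ≤ T.card + 1) :
    ∑ S ∈ T.powerset, (-1 : R) ^ S.card * (x + ∑ i ∈ S, k i) ^ m =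
      ∑ S ∈ T.powerset, (-1 : R) ^ S.card * (∑ i ∈ S, k i) ^ m +
        m * x * ∑ S ∈ T.powerset, (-1 : R) ^ S.card * (∑ i ∈ S, k i) ^ (m - 1) := by
  have binomial : ∑ S ∈ T.powerset, (-1 : R) ^ S.card * (x + ∑ i ∈ S, k i) ^ m =
      ∑ j ∈ range (m + 1), x ^ j * m.choose j *
        ∑ S ∈ T.powerset, (-1 : R) ^ S.card * (∑ i ∈ S, k i) ^ (m - j) := by
    simp only [add_pow, mul_sum]
    rw [sum_comm]
    exact sum_congr rfl fun j _ => sum_congr rfl fun S _ => by ring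
  rcases m with _ | m
  · simp
  rw [binomial, sum_range_succ', sum_range_succ', sum_eq_zero fun j hj => ?_]
  · simp only [zero_add, pow_zero, pow_one, Nat.choose_zero_right, Nat.choose_one_right, Nat.cast_one,
      add_tsub_cancel_right, tsub_zero]
    push_cast
    ring
  · rw [sum_powerset_neg_one_pow_card_mul_sum_pow_eq_zero k (by simp at hj; omega), mul_zero]

theorem alternating_subset_power_sums_eq_general (a b c d : ℝ) (h : a + b = c + d)
    (n : ℕ) (k : ℕ → ℝ) (m : ℕ) (hmn : m ≤ n + 1) :
    ∑ S ∈ (Finset.Icc 1 n).powerset, (-1 : ℝ) ^ S.card *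
        ((a + ∑ i ∈ S, k i) ^ m + (b + ∑ i ∈ S, k i) ^ m) =
      ∑ S ∈ (Finset.Icc 1 n).powerset, (-1 : ℝ) ^ S.card *
        ((c + ∑ i ∈ S, k i) ^ m + (d + ∑ i ∈ S, k i) ^ m) := by
  have hm : m ≤ (Icc 1 n).card + 1 := by simpa using hmn
  simp only [mul_add, sum_add_distrib, sum_powerset_neg_one_pow_card_mul_add_sum_pow k _ _ hm]
  linear_combination
    (m * ∑ S ∈ (Icc 1 n).powerset, (-1 : ℝ) ^ S.card * (∑ i ∈ S, k i) ^ (m - 1)) * h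

theorem alternating_subset_power_sums_eq (a b c d : ℝ) (h : a + b = c + d)
    (n : ℕ) (hn : 1 ≤ n) (k : ℕ → ℝ) (m : ℕ) (hm1 : 1 ≤ m) (hmn : m ≤ n + 1) :
    ∑ S ∈ (Finset.Icc 1 n).powerset, (-1 : ℝ) ^ S.card *
        ((a + ∑ i ∈ S, k i) ^ m + (b + ∑ i ∈ S, k i) ^ m) =
      ∑ S ∈ (Finset.Icc 1 n).powerset, (-1 : ℝ) ^ S.card *
        ((c + ∑ i ∈ S, k i) ^ m + (d + ∑ i ∈ S, k i) ^ m) :=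
  alternating_subset_power_sums_eq_general a b c d h n k m hmn
end

section
/- Fix n ≥ 1 and real numbers k₁, ..., kₙ, and for real numbers u, v and an integer m ≥ 1 define f_m(u, v) = Σ_{S ⊆ {1,...,n}} (−1)^{|S|} [ (u + s_S)^m + (v + s_S)^m ]. Then for all real u, v, one has f_{n+1}(u, v) = (−1)^n · (n+1)! · k₁ k₂ ⋯ kₙ · (u + v + Σ_{i=1}^{n} k_i). -/
/-!
Write `g(x) = Σ_{S ⊆ A} (-1)^{|S|} (x + s_S)^{n+1}`, so that `f_{n+1}(u, v) = g(u) + g(v)`.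
Removing one index `a` from `A` turns such an alternating sum into a difference
`h(x) - h(x + k_a)` of alternating sums over the smaller set; iterating, the alternating sums of the powers below `n` vanish and the one of the `n`-th power is the constant
`(-1)^n n! ∏ k_i`. Expanding `(x + t)^{n+1}` binomially then shows that `g` is affine with slope
`c = (-1)^n (n+1)! ∏ k_i`. Replacing `S` by its complement gives `g(v) = -g(-v - s_A)`, hence
`g(u) + g(v) = g(u) - g(-v - s_A) = c (u + v + s_A)`.
-/

open Finset

variable {ι R : Type*} [CommRing R]

def alternatingPowerSum (k : ι → R) (A : Finset ι) (x : R) (m : ℕ) : R :=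
  ∑ S ∈ A.powerset, (-1) ^ S.card * (x + ∑ i ∈ S, k i) ^ m

namespace alternatingPowerSum

theorem insert_eq_sub [DecidableEq ι] (k : ι → R) {a : ι} {s : Finset ι} (ha : a ∉ s) (x : R)
    (m : ℕ) :
    alternatingPowerSum k (insert a s) x m =
      alternatingPowerSum k s x m - alternatingPowerSum k s (x + k a) m := by
  rw [alternatingPowerSum, sum_powerset_insert ha, sub_eq_add_neg, alternatingPowerSum,
    alternatingPowerSum, ← sum_neg_distrib]
  congr 1
  refine sum_congr rfl fun t ht => ?_
  have hat : a ∉ t := fun h => ha (mem_powerset.mp ht h)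
  rw [card_insert_of_notMem hat, sum_insert hat]
  ring

theorem add_eq_sum_choose (k : ι → R) (A : Finset ι) (x t : R) (m : ℕ) :
    alternatingPowerSum k A (x + t) m =
      ∑ j ∈ range (m + 1), (m.choose j : R) * t ^ (m - j) * alternatingPowerSum k A x j := by
  simp only [alternatingPowerSum, mul_sum]
  rw [sum_comm]
  refine sum_congr rfl fun S _ => ?_
  rw [add_right_comm, add_pow, mul_sum]
  exact sum_congr rfl fun j _ => by ring

theorem of_le_card [DecidableEq ι] (k : ι → R) (A : Finset ι) (x : R) {m : ℕ} (hm : m ≤ A.card) :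
    alternatingPowerSum k A x m =
      if m = A.card then (-1) ^ A.card * (A.card.factorial : R) * ∏ i ∈ A, k i else 0 := by
  induction A using Finset.induction_on generalizing m with
  | empty =>
    obtain rfl : m = 0 := Nat.le_zero.mp hm
    simp [alternatingPowerSum]
  | @insert a s ha ih =>
    rw [card_insert_of_notMem ha] at hm ⊢
    have hlow : ∀ j ∈ range m, (m.choose j : R) * k a ^ (m - j) * alternatingPowerSum k s x j =
        if j = s.card then (m.choose j : R) * k a ^ (m - j) *
          ((-1) ^ s.card * (s.card.factorial : R) * ∏ i ∈ s, k i) else 0 := by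
      intro j hj
      rw [ih (by have := mem_range.mp hj; omega)]
      split_ifs <;> simp
    rw [insert_eq_sub k ha, add_eq_sum_choose, sum_range_succ, Nat.choose_self, Nat.sub_self,
      Nat.cast_one, pow_zero, one_mul, one_mul, sub_add_cancel_right, sum_congr rfl hlow, sum_ite_eq']
    by_cases hms : m = s.card + 1
    · subst hms
      rw [if_pos (self_mem_range_succ _), if_pos rfl, Nat.choose_succ_self_right,
        Nat.add_sub_cancel_left, prod_insert ha, Nat.factorial_succ]
      push_cast
      ring
    · rw [if_neg (by rw [mem_range]; omega), if_neg hms, neg_zero]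

theorem card_add_one_add (k : ι → R) (A : Finset ι) (x t : R) :
    alternatingPowerSum k A (x + t) (A.card + 1) =
      alternatingPowerSum k A x (A.card + 1) +
        (-1) ^ A.card * ((A.card + 1).factorial : R) * (∏ i ∈ A, k i) * t := by
  classical
  rw [add_eq_sum_choose, sum_range_succ, sum_range_succ, sum_eq_zero fun j hj => ?_,
    of_le_card k A x le_rfl, if_pos rfl, Nat.choose_self, Nat.sub_self, Nat.choose_succ_self_right,
    Nat.add_sub_cancel_left, Nat.factorial_succ]
  · push_cast
    ring
  · have hj := mem_range.mp hj
    rw [of_le_card k A x hj.le, if_neg hj.ne, mul_zero]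

theorem eq_neg_one_pow_mul_neg_sub_sum (k : ι → R) (A : Finset ι) (x : R) (m : ℕ) :
    alternatingPowerSum k A x m =
      (-1) ^ (A.card + m) * alternatingPowerSum k A (-x - ∑ i ∈ A, k i) m := by
  classical
  rw [alternatingPowerSum, alternatingPowerSum, mul_sum]
  have hcompl : ∀ S ∈ A.powerset, A \ (A \ S) = S := fun S hS =>
    Finset.sdiff_sdiff_eq_self (mem_powerset.mp hS)
  refine sum_nbij' (A \ ·) (A \ ·) (by simp) (by simp) hcompl hcompl fun S hS => ?_
  have hSA := mem_powerset.mp hS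
  have hsum : ∑ i ∈ A \ S, k i = ∑ i ∈ A, k i - ∑ i ∈ S, k i := sum_sdiff_eq_sub hSA
  have hcard : A.card = (A \ S).card + S.card := by
    rw [card_sdiff_of_subset hSA, Nat.sub_add_cancel (card_le_card hSA)]
  have hsq : ∀ j : ℕ, (-1 : R) ^ j * (-1) ^ j = 1 := fun j => by rw [← mul_pow]; simp
  rw [hsum, hcard, show -x - ∑ i ∈ A, k i + (∑ i ∈ A, k i - ∑ i ∈ S, k i) =
    -(x + ∑ i ∈ S, k i) by ring, neg_pow (x + ∑ i ∈ S, k i), pow_add, pow_add]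
  linear_combination (-(-1) ^ S.card * (x + ∑ i ∈ S, k i) ^ m) * hsq (A \ S).card +
    (-(-1) ^ S.card * (x + ∑ i ∈ S, k i) ^ m * ((-1) ^ (A \ S).card) ^ 2) * hsq m

end alternatingPowerSum

theorem alternating_sum_power_n_succ_general (n : ℕ) (k : ℕ → ℝ) (u v : ℝ) :
    ∑ S ∈ (Finset.Icc 1 n).powerset, (-1 : ℝ) ^ S.card *
        ((u + ∑ i ∈ S, k i) ^ (n + 1) + (v + ∑ i ∈ S, k i) ^ (n + 1)) =
      (-1 : ℝ) ^ n * (Nat.factorial (n + 1) : ℝ) * (∏ i ∈ Finset.Icc 1 n, k i) *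
        (u + v + ∑ i ∈ Finset.Icc 1 n, k i) := by
  set A := Finset.Icc 1 n
  have hcard : A.card = n := by simp [A]
  have hsplit : ∑ S ∈ A.powerset, (-1 : ℝ) ^ S.card *
      ((u + ∑ i ∈ S, k i) ^ (n + 1) + (v + ∑ i ∈ S, k i) ^ (n + 1)) =
        alternatingPowerSum k A u (n + 1) + alternatingPowerSum k A v (n + 1) := by
    simp only [alternatingPowerSum, mul_add, sum_add_distrib]
  have hreflect := alternatingPowerSum.eq_neg_one_pow_mul_neg_sub_sum k A v (n + 1)
  have hslope := alternatingPowerSum.card_add_one_add k A (-v - ∑ i ∈ A, k i) (u + v + ∑ i ∈ A, k i)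
  rw [hcard, show n + (n + 1) = 2 * n + 1 by omega, pow_succ, pow_mul] at hreflect
  rw [hcard, show -v - ∑ i ∈ A, k i + (u + v + ∑ i ∈ A, k i) = u by ring] at hslope
  rw [hsplit, hreflect, hslope, neg_one_sq, one_pow]
  ring

theorem alternating_sum_power_n_succ (n : ℕ) (hn : 1 ≤ n) (k : ℕ → ℝ) (u v : ℝ) :
    ∑ S ∈ (Finset.Icc 1 n).powerset, (-1 : ℝ) ^ S.card *
        ((u + ∑ i ∈ S, k i) ^ (n + 1) + (v + ∑ i ∈ S, k i) ^ (n + 1)) =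
      (-1 : ℝ) ^ n * (Nat.factorial (n + 1) : ℝ) * (∏ i ∈ Finset.Icc 1 n, k i) *
        (u + v + ∑ i ∈ Finset.Icc 1 n, k i) :=
  alternating_sum_power_n_succ_general n k u v
end
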